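/- For α > −1/2 and z ∈ ℂ, the Riemann–Liouville transform of the cosine is the normalized Bessel function: (2Γ(α+1)/(Γ(1/2)Γ(α+1/2))) ∫_0^1 cos(stz) (1−s²)^{α−1/2} ds = j_α(tz) for all t ≥ 0. -/

import Mathlib

open intervalIntegral

/-- The normalized spherical Bessel function
`j_α(z) = Γ(α+1) Σ_{n≥0} (−1)^n (z/2)^{2n} / (n! Γ(n+α+1))`, as an entire function. -/
noncomputable def besselJC (α : ℝ) (z : ℂ) : ℂ :=
  (Real.Gamma (α + 1) : ℂ) *
    ∑' n : ℕ, ((-1 : ℂ)) ^ n * (z / 2) ^ (2 * n) /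
      ((n.factorial : ℂ) * (Real.Gamma ((n : ℝ) + α + 1) : ℂ))

namespace PoissonAux

open MeasureTheory Set

lemma sq_image_Ioo : (fun s : ℝ => s ^ 2) '' Ioo 0 1 = Ioo 0 1 := by
  ext x
  constructor
  · rintro ⟨s, hs, rfl⟩
    simp only [mem_Ioo]
    exact ⟨pow_pos hs.1 2, by nlinarith [hs.1, hs.2]⟩
  · rintro hx
    exact ⟨Real.sqrt x, ⟨Real.sqrt_pos.2 hx.1,
      by rw [show (1:ℝ) = Real.sqrt 1 by simp]; exact Real.sqrt_lt_sqrt hx.1.le hx.2⟩,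
      Real.sq_sqrt hx.1.le⟩

lemma sq_injOn : InjOn (fun s : ℝ => s ^ 2) (Ioo 0 1) := by
  intro a ha b hb h
  dsimp only at h
  have h0 : (a - b) * (a + b) = 0 := by ring_nf; nlinarith [h]
  rcases mul_eq_zero.1 h0 with h' | h'
  · linarith
  · nlinarith [ha.1, hb.1]

lemma sq_deriv : ∀ x ∈ Ioo (0:ℝ) 1, HasDerivWithinAt (fun s : ℝ => s ^ 2) (2*x) (Ioo 0 1) x :=
  fun x _ => by simpa using (hasDerivAt_pow 2 x).hasDerivWithinAt

lemma subst_sq (g : ℝ → ℝ) :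
    ∫ x in Ioo (0:ℝ) 1, g x = ∫ s in Ioo (0:ℝ) 1, |2*s| * g (s^2) := by
  have h := integral_image_eq_integral_abs_deriv_smul measurableSet_Ioo sq_deriv sq_injOn g
  rw [sq_image_Ioo] at h
  simpa [smul_eq_mul] using h

lemma integrableOn_subst_sq (g : ℝ → ℝ) :
    IntegrableOn g (Ioo (0:ℝ) 1) ↔
      IntegrableOn (fun s => |2*s| * g (s^2)) (Ioo (0:ℝ) 1) := by
  have h := integrableOn_image_iff_integrableOn_abs_deriv_smul measurableSet_Ioo sq_deriv sq_injOn g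
  rw [sq_image_Ioo] at h
  simpa [smul_eq_mul] using h

lemma betaReal {a b : ℝ} (ha : 0 < a) (hb : 0 < b) :
    ∫ x in Ioo (0:ℝ) 1, x ^ (a-1) * (1-x) ^ (b-1)
      = Real.Gamma a * Real.Gamma b / Real.Gamma (a+b) := by
  have hG : Real.Gamma (a+b) ≠ 0 := (Real.Gamma_pos_of_pos (by linarith)).ne'
  have hbeta := Complex.Gamma_mul_Gamma_eq_betaIntegral (s := (a:ℂ)) (t := (b:ℂ))
    (by simpa using ha) (by simpa using hb)
  have key : Complex.betaIntegral a b
      = ((∫ x in Ioo (0:ℝ) 1, x ^ (a-1) * (1-x) ^ (b-1) : ℝ) : ℂ) := by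
    rw [Complex.betaIntegral, intervalIntegral.integral_of_le zero_le_one,
      integral_Ioc_eq_integral_Ioo]
    calc ∫ x in Ioo (0:ℝ) 1, (x:ℂ) ^ ((a:ℂ)-1) * (1-(x:ℂ)) ^ ((b:ℂ)-1)
        = ∫ x in Ioo (0:ℝ) 1, ((x ^ (a-1) * (1-x) ^ (b-1) : ℝ) : ℂ) := by
          refine setIntegral_congr_fun measurableSet_Ioo (fun x hx => ?_)
          rw [Complex.ofReal_mul, Complex.ofReal_cpow hx.1.le,
            Complex.ofReal_cpow (by linarith [hx.2])]
          push_cast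
          ring_nf
      _ = _ := integral_ofReal
  have h2 : (Real.Gamma a : ℂ) * Real.Gamma b
      = Real.Gamma (a+b) * ((∫ x in Ioo (0:ℝ) 1, x ^ (a-1) * (1-x) ^ (b-1) : ℝ) : ℂ) := by
    rw [← key]
    rw [← Complex.Gamma_ofReal, ← Complex.Gamma_ofReal, ← Complex.Gamma_ofReal]
    push_cast
    exact hbeta
  rw [eq_div_iff hG, ← Complex.ofReal_inj]
  push_cast
  linear_combination h2.symm

lemma pointwise_eq (α : ℝ) (n : ℕ) {s : ℝ} (hs : s ∈ Ioo (0:ℝ) 1) :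
    |2*s| * ((s^2) ^ (((n:ℝ)+1/2)-1) * (1-s^2) ^ ((α+1/2)-1))
      = 2 * (s^(2*n) * (1-s^2)^(α-1/2)) := by
  obtain ⟨hs0, hs1⟩ := hs
  rw [abs_of_pos (by linarith)]
  have e1 : ((s^2 : ℝ)) ^ (((n:ℝ)+1/2)-1) = s ^ (2*(n:ℝ)-1) := by
    rw [← Real.rpow_natCast s 2, ← Real.rpow_mul hs0.le]
    norm_num
    ring_nf
  have e2 : s * s ^ (2*(n:ℝ)-1) = s ^ (2*n) := by
    rw [← Real.rpow_natCast s (2*n),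
      show ((2*n:ℕ):ℝ) = 1 + (2*(n:ℝ)-1) by push_cast; ring,
      Real.rpow_add hs0, Real.rpow_one]
  have e3 : ((α+1/2)-1 : ℝ) = α - 1/2 := by ring
  rw [e1, e3]
  calc 2*s * (s ^ (2*(n:ℝ)-1) * (1-s^2)^(α-1/2))
      = 2 * ((s * s ^ (2*(n:ℝ)-1)) * (1-s^2)^(α-1/2)) := by ring
    _ = _ := by rw [e2]

lemma moment_value (α : ℝ) (hα : -1/2 < α) (n : ℕ) :
    ∫ s in Ioo (0:ℝ) 1, s^(2*n) * (1-s^2)^(α-1/2)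
      = Real.Gamma ((n:ℝ)+1/2) * Real.Gamma (α+1/2) / (2 * Real.Gamma ((n:ℝ)+α+1)) := by
  have h := subst_sq (fun x => x ^ (((n:ℝ)+1/2)-1) * (1-x) ^ ((α+1/2)-1))
  rw [betaReal (by positivity) (by linarith)] at h
  have h2 : ∫ s in Ioo (0:ℝ) 1, |2*s| * ((fun x => x ^ (((n:ℝ)+1/2)-1) * (1-x) ^ ((α+1/2)-1)) (s^2))
      = 2 * ∫ s in Ioo (0:ℝ) 1, s^(2*n) * (1-s^2)^(α-1/2) := by
    rw [← MeasureTheory.integral_const_mul]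
    exact setIntegral_congr_fun measurableSet_Ioo (fun s hs => pointwise_eq α n hs)
  rw [h2] at h
  have e : ((n:ℝ)+1/2) + (α+1/2) = (n:ℝ)+α+1 := by ring
  rw [e] at h
  have hB : Real.Gamma ((n:ℝ)+α+1) ≠ 0 := by
    have hn0 : (0:ℝ) ≤ (n:ℝ) := Nat.cast_nonneg n
    exact (Real.Gamma_pos_of_pos (by linarith)).ne'
  rw [eq_div_iff (by simpa using mul_ne_zero two_ne_zero hB)]
  rw [div_eq_iff hB] at h
  linear_combination -h

lemma moment_integrable (α : ℝ) (hα : -1/2 < α) (n : ℕ) :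
    IntegrableOn (fun s => s^(2*n) * (1-s^2)^(α-1/2)) (Ioo (0:ℝ) 1) := by
  have hg : IntegrableOn (fun x : ℝ => x ^ (((n:ℝ)+1/2)-1) * (1-x) ^ ((α+1/2)-1)) (Ioo (0:ℝ) 1) := by
    have hc := Complex.betaIntegral_convergent (u := ((n:ℝ)+1/2 : ℂ)) (v := ((α:ℝ)+1/2 : ℂ))
      (by push_cast; simp; positivity) (by push_cast; simp; linarith)
    have hIoc : IntegrableOn
        (fun x : ℝ => (x:ℂ) ^ ((((n:ℝ)+1/2 : ℝ):ℂ)-1) * (1-(x:ℂ)) ^ (((α+1/2 : ℝ):ℂ)-1))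
        (Ioc (0:ℝ) 1) := by
      have := (intervalIntegrable_iff_integrableOn_Ioc_of_le zero_le_one).1 hc
      convert this using 2 <;> push_cast <;> rfl
    have hn : IntegrableOn _ (Ioo (0:ℝ) 1) := (hIoc.mono_set Ioo_subset_Ioc_self).norm
    refine hn.congr_fun (fun x hx => ?_) measurableSet_Ioo
    have e : ((x:ℂ) ^ ((((n:ℝ)+1/2:ℝ):ℂ)-1) * (1-(x:ℂ)) ^ (((α+1/2:ℝ):ℂ)-1))
        = ((x ^ (((n:ℝ)+1/2)-1) * (1-x) ^ ((α+1/2)-1) : ℝ) : ℂ) := by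
      rw [Complex.ofReal_mul, Complex.ofReal_cpow hx.1.le,
        Complex.ofReal_cpow (by linarith [hx.2])]
      push_cast
      ring_nf
    beta_reduce
    rw [e, Complex.norm_real, Real.norm_eq_abs,
      abs_of_nonneg (mul_nonneg (Real.rpow_nonneg hx.1.le _) (Real.rpow_nonneg (by linarith [hx.2]) _))]
  have h2 := (integrableOn_subst_sq _).1 hg
  have h3 : IntegrableOn (fun s : ℝ => 2 * (s^(2*n) * (1-s^2)^(α-1/2))) (Ioo (0:ℝ) 1) :=
    h2.congr_fun (fun s hs => pointwise_eq α n hs) measurableSet_Ioo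
  simpa [IntegrableOn] using h3.const_mul (1/2 : ℝ)

lemma Gamma_nat_add_half (n : ℕ) :
    Real.Gamma ((n:ℝ)+1/2) = Real.sqrt Real.pi * (2*n).factorial / (4^n * n.factorial) := by
  have h := Real.Gamma_mul_Gamma_add_half ((n:ℝ)+1/2)
  have e1 : ((n:ℝ)+1/2) + 1/2 = ((n:ℝ)+1) := by ring
  have e2 : 2*((n:ℝ)+1/2) = ((2*n+1 : ℕ) : ℝ) := by push_cast; ring
  have e3 : ((2*n+1 : ℕ):ℝ) = ((2*n : ℕ):ℝ)+1 := by push_cast; ring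
  rw [e1, e2, Real.Gamma_nat_eq_factorial, e3, Real.Gamma_nat_eq_factorial] at h
  have e4 : (2:ℝ) ^ ((1:ℝ) - (((2*n:ℕ):ℝ)+1)) = ((4^n : ℝ))⁻¹ := by
    rw [show (1:ℝ) - (((2*n:ℕ):ℝ)+1) = -((2*n:ℕ):ℝ) by push_cast; ring,
      Real.rpow_neg (by norm_num), Real.rpow_natCast]
    norm_num [pow_mul]
  rw [e4] at h
  have h4 : (4:ℝ)^n ≠ 0 := by positivity
  have hf : (n.factorial : ℝ) ≠ 0 := by exact_mod_cast n.factorial_ne_zero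
  rw [eq_div_iff (mul_ne_zero h4 hf)]
  calc Real.Gamma ((n:ℝ)+1/2) * (4^n * n.factorial)
      = (Real.Gamma ((n:ℝ)+1/2) * n.factorial) * 4^n := by ring
    _ = ((2*n).factorial * (4^n)⁻¹ * Real.sqrt Real.pi) * 4^n := by rw [h]
    _ = Real.sqrt Real.pi * (2*n).factorial := by field_simp

private lemma algAux (a h b p q f F : ℝ) (hp : p ≠ 0) (hh : h ≠ 0) (hb : b ≠ 0)
    (hq : q ≠ 0) (hf : f ≠ 0) :
    2*a/(p*h) * (p*F/(q*f) * h / (2*b)) = a * (F/(q*f*b)) := by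
  field_simp

lemma coeff_eq (α : ℝ) (hα : -1/2 < α) (n : ℕ) :
    2 * Real.Gamma (α+1) / (Real.Gamma (1/2) * Real.Gamma (α+1/2)) *
      (Real.Gamma ((n:ℝ)+1/2) * Real.Gamma (α+1/2) / (2*Real.Gamma ((n:ℝ)+α+1)))
    = Real.Gamma (α+1) * ((2*n).factorial / (4^n * n.factorial * Real.Gamma ((n:ℝ)+α+1))) := by
  have h2 : Real.Gamma (α+1/2) ≠ 0 := (Real.Gamma_pos_of_pos (by linarith)).ne'
  have h3 : Real.Gamma ((n:ℝ)+α+1) ≠ 0 := by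
    have hn0 : (0:ℝ) ≤ (n:ℝ) := Nat.cast_nonneg n
    exact (Real.Gamma_pos_of_pos (by linarith)).ne'
  have h4 : (4:ℝ)^n ≠ 0 := by positivity
  have hf : (n.factorial : ℝ) ≠ 0 := by exact_mod_cast n.factorial_ne_zero
  have hs : Real.sqrt Real.pi ≠ 0 := by positivity
  rw [Real.Gamma_one_half_eq, Gamma_nat_add_half]
  exact algAux _ _ _ _ _ _ _ hs h2 h3 h4 hf

lemma term_eq (α : ℝ) (hα : -1/2 < α) (n : ℕ) (x : ℂ) :
    ((2 * Real.Gamma (α + 1) / (Real.Gamma (1/2) * Real.Gamma (α + 1/2)) : ℝ) : ℂ) *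
      (((-1:ℂ))^n * x^(2*n) / ((2*n).factorial : ℂ) *
        ((Real.Gamma ((n:ℝ)+1/2) * Real.Gamma (α+1/2) / (2*Real.Gamma ((n:ℝ)+α+1)) : ℝ) : ℂ))
    = ((-1:ℂ))^n * (x/2)^(2*n) / ((n.factorial : ℂ) * (Real.Gamma ((n:ℝ)+α+1) : ℂ))
        * (Real.Gamma (α+1) : ℂ) := by
  have key := coeff_eq α hα n
  have h3 : (Real.Gamma ((n:ℝ)+α+1) : ℂ) ≠ 0 := by
    have hn0 : (0:ℝ) ≤ (n:ℝ) := Nat.cast_nonneg n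
    exact_mod_cast Complex.ofReal_ne_zero.2 (Real.Gamma_pos_of_pos (by linarith)).ne'
  have h4 : ((4:ℂ))^n ≠ 0 := by norm_num
  have hf : ((n.factorial : ℂ)) ≠ 0 := by exact_mod_cast n.factorial_ne_zero
  have hF : (((2*n).factorial : ℂ)) ≠ 0 := by exact_mod_cast (2*n).factorial_ne_zero
  calc ((2 * Real.Gamma (α + 1) / (Real.Gamma (1/2) * Real.Gamma (α + 1/2)) : ℝ) : ℂ) *
      (((-1:ℂ))^n * x^(2*n) / ((2*n).factorial : ℂ) *
        ((Real.Gamma ((n:ℝ)+1/2) * Real.Gamma (α+1/2) / (2*Real.Gamma ((n:ℝ)+α+1)) : ℝ) : ℂ))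
      = ((-1:ℂ))^n * x^(2*n) / ((2*n).factorial : ℂ) *
        (((2 * Real.Gamma (α + 1) / (Real.Gamma (1/2) * Real.Gamma (α + 1/2)) *
          (Real.Gamma ((n:ℝ)+1/2) * Real.Gamma (α+1/2) / (2*Real.Gamma ((n:ℝ)+α+1))) : ℝ)) : ℂ) := by
        push_cast
        ring
    _ = ((-1:ℂ))^n * x^(2*n) / ((2*n).factorial : ℂ) *
        (((Real.Gamma (α+1) * ((2*n).factorial / (4^n * n.factorial * Real.Gamma ((n:ℝ)+α+1))) : ℝ)) : ℂ) := by
        rw [key]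
    _ = ((-1:ℂ))^n * (x/2)^(2*n) / ((n.factorial : ℂ) * (Real.Gamma ((n:ℝ)+α+1) : ℂ))
        * (Real.Gamma (α+1) : ℂ) := by
        push_cast
        rw [div_pow, show ((2:ℂ))^(2*n) = 4^n by rw [pow_mul]; norm_num]
        field_simp

/-- summand -/
noncomputable def pterm (α : ℝ) (x : ℂ) (n : ℕ) (s : ℝ) : ℂ :=
  ((-1:ℂ))^n * ((s:ℂ)*x)^(2*n) / ((2*n).factorial : ℂ) * (((1-s^2)^(α-1/2) : ℝ) : ℂ)

lemma pterm_eq (α : ℝ) (x : ℂ) (n : ℕ) (s : ℝ) :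
    pterm α x n s = (((-1:ℂ))^n * x^(2*n) / ((2*n).factorial : ℂ)) *
      (((s^(2*n) * (1-s^2)^(α-1/2) : ℝ)) : ℂ) := by
  rw [pterm]
  push_cast
  ring

lemma pterm_integrable (α : ℝ) (hα : -1/2 < α) (x : ℂ) (n : ℕ) :
    IntegrableOn (pterm α x n) (Ioo (0:ℝ) 1) := by
  have h1 : IntegrableOn _ (Ioo (0:ℝ) 1) := ((moment_integrable α hα n).ofReal (𝕜 := ℂ)).const_mul
    (((-1:ℂ))^n * x^(2*n) / ((2*n).factorial : ℂ))
  exact h1.congr_fun (fun s _ => (pterm_eq α x n s).symm) measurableSet_Ioo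

lemma pterm_value (α : ℝ) (hα : -1/2 < α) (x : ℂ) (n : ℕ) :
    ∫ s in Ioo (0:ℝ) 1, pterm α x n s
      = (((-1:ℂ))^n * x^(2*n) / ((2*n).factorial : ℂ)) *
        ((Real.Gamma ((n:ℝ)+1/2) * Real.Gamma (α+1/2) / (2*Real.Gamma ((n:ℝ)+α+1)) : ℝ) : ℂ) := by
  calc ∫ s in Ioo (0:ℝ) 1, pterm α x n s
      = ∫ s in Ioo (0:ℝ) 1, (((-1:ℂ))^n * x^(2*n) / ((2*n).factorial : ℂ)) *
          (((s^(2*n) * (1-s^2)^(α-1/2) : ℝ)) : ℂ) :=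
        setIntegral_congr_fun measurableSet_Ioo (fun s _ => pterm_eq α x n s)
    _ = (((-1:ℂ))^n * x^(2*n) / ((2*n).factorial : ℂ)) *
          ((∫ s in Ioo (0:ℝ) 1, s^(2*n) * (1-s^2)^(α-1/2) : ℝ) : ℂ) := by
        rw [MeasureTheory.integral_const_mul]
        congr 1
        exact _root_.integral_ofReal
    _ = _ := by rw [moment_value α hα n]

lemma pterm_norm_le (α : ℝ) (hα : -1/2 < α) (x : ℂ) (n : ℕ) :
    (∫ s in Ioo (0:ℝ) 1, ‖pterm α x n s‖)
      ≤ (‖x‖^(2*n) / ((2*n).factorial : ℝ)) * ∫ s in Ioo (0:ℝ) 1, (1-s^2)^(α-1/2) := by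
  have hw_int : IntegrableOn (fun s : ℝ => (1-s^2)^(α-1/2)) (Ioo (0:ℝ) 1) := by
    simpa using moment_integrable α hα 0
  rw [← MeasureTheory.integral_const_mul]
  refine setIntegral_mono_on ((pterm_integrable α hα x n).norm)
    (hw_int.const_mul _) measurableSet_Ioo (fun s hs => ?_)
  rw [pterm_eq, norm_mul]
  have hw0 : (0:ℝ) ≤ (1-s^2)^(α-1/2) := Real.rpow_nonneg (by nlinarith [hs.1, hs.2]) _
  have hc : ‖((-1:ℂ))^n * x^(2*n) / ((2*n).factorial : ℂ)‖
      = ‖x‖^(2*n) / ((2*n).factorial : ℝ) := by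
    simp [norm_div, norm_mul, norm_pow]
  rw [hc, Complex.norm_real, Real.norm_eq_abs,
    abs_of_nonneg (mul_nonneg (pow_nonneg hs.1.le _) hw0)]
  have hCn : (0:ℝ) ≤ ‖x‖^(2*n) / ((2*n).factorial : ℝ) := by positivity
  have hle : s^(2*n) * (1-s^2)^(α-1/2) ≤ (1-s^2)^(α-1/2) := by
    nlinarith [pow_le_one₀ hs.1.le hs.2.le (n := 2*n), hw0,
      pow_nonneg hs.1.le (2*n)]
  exact mul_le_mul_of_nonneg_left hle hCn

lemma main_aux (α : ℝ) (hα : -1/2 < α) (z : ℂ) (t : ℝ) (ht : 0 ≤ t) :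
    ((2 * Real.Gamma (α + 1) / (Real.Gamma (1/2) * Real.Gamma (α + 1/2)) : ℝ) : ℂ) *
        ∫ s in (0 : ℝ)..1, Complex.cos ((s : ℂ) * (t : ℂ) * z) *
          (((1 - s ^ 2 : ℝ) ^ (α - 1/2) : ℝ) : ℂ)
      = besselJC α ((t : ℂ) * z) := by
  set x : ℂ := (t:ℂ) * z with hxdef
  have hsummable : Summable (fun n : ℕ =>
      (‖x‖^(2*n) / ((2*n).factorial : ℝ)) * ∫ s in Ioo (0:ℝ) 1, (1-s^2)^(α-1/2)) := by
    apply Summable.mul_right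
    have hinj : Function.Injective (fun n : ℕ => 2*n) := fun a b h => by dsimp only at h; omega
    simpa [Function.comp_def] using (Real.summable_pow_div_factorial ‖x‖).comp_injective hinj
  have hsum_norm : Summable (fun n : ℕ => ∫ s in Ioo (0:ℝ) 1, ‖pterm α x n s‖) :=
    Summable.of_nonneg_of_le (fun n => integral_nonneg (fun s => norm_nonneg _))
      (fun n => pterm_norm_le α hα x n) hsummable
  have hswap := MeasureTheory.integral_tsum_of_summable_integral_norm
    (μ := volume.restrict (Ioo (0:ℝ) 1)) (F := pterm α x)
    (fun n => pterm_integrable α hα x n) hsum_norm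
  have hcos : ∀ s : ℝ, Complex.cos ((s:ℂ)*(t:ℂ)*z) * (((1-s^2)^(α-1/2) : ℝ) : ℂ)
      = ∑' n, pterm α x n s := by
    intro s
    rw [show (s:ℂ)*(t:ℂ)*z = (s:ℂ) * x by rw [hxdef]; ring, Complex.cos_eq_tsum,
      ← tsum_mul_right]
    rfl
  calc ((2 * Real.Gamma (α + 1) / (Real.Gamma (1/2) * Real.Gamma (α + 1/2)) : ℝ) : ℂ) *
        ∫ s in (0 : ℝ)..1, Complex.cos ((s : ℂ) * (t : ℂ) * z) *
          (((1 - s ^ 2 : ℝ) ^ (α - 1/2) : ℝ) : ℂ)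
      = ((2 * Real.Gamma (α + 1) / (Real.Gamma (1/2) * Real.Gamma (α + 1/2)) : ℝ) : ℂ) *
        ∫ s in Ioo (0:ℝ) 1, ∑' n, pterm α x n s := by
        rw [intervalIntegral.integral_of_le zero_le_one, integral_Ioc_eq_integral_Ioo]
        congr 1
        exact setIntegral_congr_fun measurableSet_Ioo (fun s _ => hcos s)
    _ = ((2 * Real.Gamma (α + 1) / (Real.Gamma (1/2) * Real.Gamma (α + 1/2)) : ℝ) : ℂ) *
        ∑' n, ∫ s in Ioo (0:ℝ) 1, pterm α x n s := by rw [← hswap]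
    _ = ∑' n : ℕ, ((2 * Real.Gamma (α + 1) / (Real.Gamma (1/2) * Real.Gamma (α + 1/2)) : ℝ) : ℂ) *
        ((((-1:ℂ))^n * x^(2*n) / ((2*n).factorial : ℂ)) *
          ((Real.Gamma ((n:ℝ)+1/2) * Real.Gamma (α+1/2) / (2*Real.Gamma ((n:ℝ)+α+1)) : ℝ) : ℂ)) := by
        rw [← tsum_mul_left]
        exact tsum_congr (fun n => by rw [pterm_value α hα x n])
    _ = ∑' n : ℕ, (((-1:ℂ))^n * (x/2)^(2*n) / ((n.factorial : ℂ) * (Real.Gamma ((n:ℝ)+α+1) : ℂ))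
          * (Real.Gamma (α+1) : ℂ)) :=
        tsum_congr (fun n => term_eq α hα n x)
    _ = besselJC α x := by
        rw [tsum_mul_right, besselJC, mul_comm]

end PoissonAux

/-- Poisson integral representation: for `α > −1/2`, `z ∈ ℂ`, `t ≥ 0`:
`(2Γ(α+1)/(Γ(1/2)Γ(α+1/2))) ∫_0^1 cos(stz) (1−s²)^{α−1/2} ds = j_α(tz)`. -/
theorem poisson_representation_bessel (α : ℝ) (hα : -1/2 < α) (z : ℂ) (t : ℝ) (ht : 0 ≤ t) :
    ((2 * Real.Gamma (α + 1) / (Real.Gamma (1/2) * Real.Gamma (α + 1/2)) : ℝ) : ℂ) *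
        ∫ s in (0 : ℝ)..1, Complex.cos ((s : ℂ) * (t : ℂ) * z) *
          (((1 - s ^ 2 : ℝ) ^ (α - 1/2) : ℝ) : ℂ)
      = besselJC α ((t : ℂ) * z) :=
  PoissonAux.main_aux α hα z t ht
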